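/- Exponential Trust Concentration: fix t ∈ ℕ and γ > 0, and suppose that at every step s < t every biased evaluator's loss exceeds every truthful evaluator's loss by at least γ, i.e. l(s, m) ≥ l(s, m') + γ for all m ∈ B, m' ∈ G, and s < t. Then the normalized aggregate weight of the biased evaluators satisfies W_bias(t) := (∑_{m∈B} w(t, m)) / (∑_{m∈M} w(t, m)) ≤ (|B| / |G|) · exp(−η γ t). -/

import Mathlib

/-!
A per-step loss gap of `γ` multiplies the ratio of a biased weight to a truthful one by at most
`exp (-η γ)` at every step, so after `t` steps each biased weight is at most `exp (-η γ t)` times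
each truthful weight. Averaging over `B × G` gives `∑_B w ≤ (|B| / |G|) exp (-η γ t) ∑_G w`, and
`∑_G w ≤ ∑_M w` since the weights are positive.
-/

/-- Multiplicative-weights trust weights: `w 0 m = 1/|M|` and
`w (t+1) m = w t m · exp(−η · l t m)`. -/
noncomputable def mwuWeight {M : Type*} [Fintype M] (η : ℝ) (l : ℕ → M → ℝ) :
    ℕ → M → ℝ
  | 0 => fun _ => 1 / (Fintype.card M : ℝ)
  | t + 1 => fun m => mwuWeight η l t m * Real.exp (-η * l t m)

theorem Finset.sum_div_sum_le_card_div_card_mul {ι : Type*} {s u : Finset ι} {f : ι → ℝ} {c : ℝ}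
    (hu : u.Nonempty) (hf : ∀ j ∈ u, 0 < f j) (h : ∀ i ∈ s, ∀ j ∈ u, f i ≤ c * f j) :
    (∑ i ∈ s, f i) / (∑ j ∈ u, f j) ≤ ((s.card : ℝ) / (u.card : ℝ)) * c := by
  have hsum : 0 < ∑ j ∈ u, f j := Finset.sum_pos hf hu
  have hcard : (0 : ℝ) < u.card := by exact_mod_cast hu.card_pos
  have hdouble : (∑ i ∈ s, f i) * u.card ≤ s.card * c * ∑ j ∈ u, f j :=
    calc (∑ i ∈ s, f i) * u.card = ∑ i ∈ s, ∑ _j ∈ u, f i := by simp [Finset.sum_mul, mul_comm]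
      _ ≤ ∑ _i ∈ s, ∑ j ∈ u, c * f j := Finset.sum_le_sum fun i hi => Finset.sum_le_sum (h i hi)
      _ = s.card * c * ∑ j ∈ u, f j := by simp [← Finset.mul_sum, mul_assoc]
  rw [div_mul_eq_mul_div, div_le_div_iff₀ hsum hcard]
  linarith

namespace mwuWeight

variable {M : Type*} [Fintype M]

theorem nonneg (η : ℝ) (l : ℕ → M → ℝ) (t : ℕ) (m : M) : 0 ≤ mwuWeight η l t m := by
  induction t with
  | zero => simp [mwuWeight]
  | succ t ih => exact mul_nonneg ih (Real.exp_pos _).le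

theorem pos [Nonempty M] (η : ℝ) (l : ℕ → M → ℝ) (t : ℕ) (m : M) : 0 < mwuWeight η l t m := by
  induction t with
  | zero => simp [mwuWeight, Fintype.card_pos]
  | succ t ih => exact mul_pos ih (Real.exp_pos _)

theorem le_exp_mul_of_loss_gap {η : ℝ} (hη : 0 ≤ η) {l : ℕ → M → ℝ} {γ : ℝ} {m m' : M} :
    ∀ t : ℕ, (∀ s < t, l s m' + γ ≤ l s m) →
      mwuWeight η l t m ≤ Real.exp (-(η * γ * t)) * mwuWeight η l t m'
  | 0, _ => by simp [mwuWeight]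
  | t + 1, hgap => by
    have ih := le_exp_mul_of_loss_gap hη t fun s hs => hgap s (Nat.lt_succ_of_lt hs)
    have hstep : Real.exp (-η * l t m) ≤ Real.exp (-(η * γ)) * Real.exp (-η * l t m') := by
      rw [← Real.exp_add, Real.exp_le_exp]
      nlinarith [hgap t t.lt_succ_self]
    calc mwuWeight η l (t + 1) m = mwuWeight η l t m * Real.exp (-η * l t m) := rfl
      _ ≤ (Real.exp (-(η * γ * t)) * mwuWeight η l t m') *
            (Real.exp (-(η * γ)) * Real.exp (-η * l t m')) :=
        mul_le_mul ih hstep (Real.exp_pos _).le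
          (mul_nonneg (Real.exp_pos _).le (nonneg η l t m'))
      _ = Real.exp (-(η * γ * ↑(t + 1))) * mwuWeight η l (t + 1) m' := by
        simp only [mwuWeight]
        push_cast
        rw [show -(η * γ * (t + 1)) = -(η * γ * t) + -(η * γ) by ring, Real.exp_add]
        ring

end mwuWeight

theorem mwu_exponential_trust_concentration_general
    {M : Type*} [Fintype M]
    (B G : Finset M) (hG : G.Nonempty)
    (η : ℝ) (hη : 0 < η) (l : ℕ → M → ℝ)
    (t : ℕ) (γ : ℝ)
    (hdom : ∀ s < t, ∀ m ∈ B, ∀ m' ∈ G, l s m' + γ ≤ l s m) :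
    (∑ m ∈ B, mwuWeight η l t m) / (∑ m, mwuWeight η l t m) ≤
      ((B.card : ℝ) / (G.card : ℝ)) * Real.exp (-(η * γ * t)) := by
  have : Nonempty M := ⟨hG.choose⟩
  have hpos := mwuWeight.pos η l t
  calc (∑ m ∈ B, mwuWeight η l t m) / (∑ m, mwuWeight η l t m)
      ≤ (∑ m ∈ B, mwuWeight η l t m) / (∑ m ∈ G, mwuWeight η l t m) :=
        div_le_div_of_nonneg_left (Finset.sum_nonneg fun m _ => (hpos m).le)
          (Finset.sum_pos (fun m _ => hpos m) hG)
          (Finset.sum_le_univ_sum_of_nonneg fun m => (hpos m).le)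
    _ ≤ _ := Finset.sum_div_sum_le_card_div_card_mul hG (fun m _ => hpos m) fun m hm m' hm' =>
        mwuWeight.le_exp_mul_of_loss_gap hη.le t fun s hs => hdom s hs m hm m' hm'

/-- **Exponential Trust Concentration.** If at every step `s < t` every biased evaluator's
loss exceeds every truthful evaluator's loss by at least `γ`, then the normalized aggregate
weight of the biased evaluators satisfies
`W_bias(t) ≤ (|B|/|G|) · exp(−ηγt)`. -/
theorem mwu_exponential_trust_concentration
    {M : Type*} [Fintype M] [DecidableEq M] [Nonempty M]
    (B G : Finset M) (hB : B.Nonempty) (hG : G.Nonempty)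
    (hdisj : Disjoint B G) (hunion : B ∪ G = Finset.univ)
    (η : ℝ) (hη : 0 < η) (l : ℕ → M → ℝ)
    (t : ℕ) (γ : ℝ) (hγ : 0 < γ)
    (hdom : ∀ s < t, ∀ m ∈ B, ∀ m' ∈ G, l s m' + γ ≤ l s m) :
    (∑ m ∈ B, mwuWeight η l t m) / (∑ m, mwuWeight η l t m) ≤
      ((B.card : ℝ) / (G.card : ℝ)) * Real.exp (-(η * γ * t)) :=
  mwu_exponential_trust_concentration_general B G hG η hη l t γ hdom
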